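/- arXiv:2303.03310 — 6 statements merged into one kernel-verified Lean document; each statement's English description precedes it below -/
import Mathlib

section
/- For all real numbers a₁, a₂, a₃, b₁, b₂, b₃: (a₁² + b₂² + b₃²)(a₂² + b₃² + b₁²)(a₃² + b₁² + b₂²) ≥ (a₁b₁ + a₂b₂ + a₃b₃)²(b₁² + b₂² + b₃²). -/
lemma keyK (x y z s r : ℝ) (hx : 0 ≤ x) (hy : 0 ≤ y) (hz : 0 ≤ z)
    (hs : 0 ≤ s) (hr : 0 ≤ r) (h : x*y*z = r*s^2) :
    s^2 + 2*r*s + x^2 + y^2 + z^2 ≥ 2*(x*y + y*z + z*x) := by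
  rcases eq_or_lt_of_le hs with hs0 | hs0
  · have h0 : x*y*z = 0 := by rw [h, ← hs0]; ring
    rcases mul_eq_zero.1 h0 with h1 | h1
    · rcases mul_eq_zero.1 h1 with h2 | h2
      · nlinarith [sq_nonneg (y-z), hy, hz, hs0.symm, h2]
      · nlinarith [sq_nonneg (x-z), hx, hz, hs0.symm, h2]
    · nlinarith [sq_nonneg (x-y), hx, hy, hs0.symm, h1]
  · have hcase : (x-s)*(y-s) ≥ 0 ∨ (y-s)*(z-s) ≥ 0 ∨ (x-s)*(z-s) ≥ 0 := by
      rcases le_total x s with h1 | h1 <;> rcases le_total y s with h2 | h2 <;>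
        rcases le_total z s with h3 | h3 <;>
        first
          | (left; nlinarith)
          | (right; left; nlinarith)
          | (right; right; nlinarith)
    have hs2 : (0:ℝ) < s^2 := by positivity
    rcases hcase with hc | hc | hc
    · have key : z*s*((x-s)*(y-s)) ≥ 0 := by positivity
      nlinarith [sq_nonneg (z-s), sq_nonneg (x-y), mul_pos hs0 hs0, key, h]
    · have key : x*s*((y-s)*(z-s)) ≥ 0 := by positivity
      nlinarith [sq_nonneg (x-s), sq_nonneg (y-z), mul_pos hs0 hs0, key, h]
    · have key : y*s*((x-s)*(z-s)) ≥ 0 := by positivity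
      nlinarith [sq_nonneg (y-s), sq_nonneg (x-z), mul_pos hs0 hs0, key, h]

theorem intertwined_cauchy_schwarz_weak (a₁ a₂ a₃ b₁ b₂ b₃ : ℝ) :
    (a₁^2 + b₂^2 + b₃^2) * (a₂^2 + b₃^2 + b₁^2) * (a₃^2 + b₁^2 + b₂^2) ≥
      (a₁*b₁ + a₂*b₂ + a₃*b₃)^2 * (b₁^2 + b₂^2 + b₃^2) := by
  have hrel : |a₁*b₂*b₃| * |a₂*b₁*b₃| * |a₃*b₁*b₂| = |a₁*a₂*a₃| * |b₁*b₂*b₃|^2 := by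
    rw [← abs_mul, ← abs_mul, ← abs_pow, ← abs_mul]
    congr 1; ring
  have hK := keyK |a₁*b₂*b₃| |a₂*b₁*b₃| |a₃*b₁*b₂| |b₁*b₂*b₃| |a₁*a₂*a₃|
    (abs_nonneg _) (abs_nonneg _) (abs_nonneg _) (abs_nonneg _) (abs_nonneg _) hrel
  have hD' : (a₁*a₂*a₃)^2 + 2*(b₁*b₂*b₃)^2 + (a₁*b₂*b₃)^2 + (a₂*b₁*b₃)^2 + (a₃*b₁*b₂)^2
      - 2*((a₁*b₂*b₃)*(a₂*b₁*b₃) + (a₂*b₁*b₃)*(a₃*b₁*b₂) + (a₃*b₁*b₂)*(a₁*b₂*b₃)) ≥ 0 := by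
    have e1 := le_abs_self ((a₁*b₂*b₃)*(a₂*b₁*b₃))
    have e2 := le_abs_self ((a₂*b₁*b₃)*(a₃*b₁*b₂))
    have e3 := le_abs_self ((a₃*b₁*b₂)*(a₁*b₂*b₃))
    rw [abs_mul] at e1 e2 e3
    nlinarith [hK, sq_nonneg (|a₁*a₂*a₃| - |b₁*b₂*b₃|), sq_abs (a₁*a₂*a₃), sq_abs (b₁*b₂*b₃),
      sq_abs (a₁*b₂*b₃), sq_abs (a₂*b₁*b₃), sq_abs (a₃*b₁*b₂), e1, e2, e3]
  nlinarith [hD',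
    mul_nonneg (sq_nonneg (a₁*a₂ - b₁*b₂)) (add_nonneg (sq_nonneg b₁) (sq_nonneg b₂)),
    mul_nonneg (sq_nonneg (a₂*a₃ - b₂*b₃)) (add_nonneg (sq_nonneg b₂) (sq_nonneg b₃)),
    mul_nonneg (sq_nonneg (a₁*a₃ - b₁*b₃)) (add_nonneg (sq_nonneg b₁) (sq_nonneg b₃))]
end

section
/- For all real numbers b₁, b₂, b₃, k₁, k₂, k₃: (k₁²b₁² + b₂² + b₃²)(k₂²b₂² + b₃² + b₁²)(k₃²b₃² + b₁² + b₂²) ≥ (k₁b₁² + k₂b₂² + k₃b₃²)²(b₁² + b₂² + b₃²) + (1/2)·b₁²b₂²b₃²·[(k₁−k₂)² + (k₂−k₃)² + (k₁−k₃)²]. -/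
set_option maxHeartbeats 40000000
set_option maxRecDepth 100000

private lemma delta1_nonneg (b₁ b₂ b₃ k₂ k₃ : ℝ) :
    (0:ℝ) ≤ 4*b₂^2*b₃^8*k₃^2 - 8*b₂^2*b₃^8*k₂*k₃^3 + 4*b₂^2*b₃^8*k₂^2*k₃^4 + 4*b₂^4*b₃^6*k₃^2 - 8*b₂^4*b₃^6*k₂*k₃^3 + 4*b₂^4*b₃^6*k₂^2*k₃^2 + 4*b₂^4*b₃^6*k₂^2*k₃^4 - 8*b₂^4*b₃^6*k₂^3*k₃^3 + 4*b₂^4*b₃^6*k₂^4*k₃^4 + 4*b₂^6*b₃^4*k₂^2 + 4*b₂^6*b₃^4*k₂^2*k₃^2 - 8*b₂^6*b₃^4*k₂^3*k₃ - 8*b₂^6*b₃^4*k₂^3*k₃^3 + 4*b₂^6*b₃^4*k₂^4*k₃^2 + 4*b₂^6*b₃^4*k₂^4*k₃^4 + 4*b₂^8*b₃^2*k₂^2 - 8*b₂^8*b₃^2*k₂^3*k₃ + 4*b₂^8*b₃^2*k₂^4*k₃^2 + 8*b₁^2*b₂^2*b₃^6*k₃^2 - 4*b₁^2*b₂^2*b₃^6*k₂*k₃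 - 12*b₁^2*b₂^2*b₃^6*k₂*k₃^3 + 4*b₁^2*b₂^2*b₃^6*k₂^2*k₃^2 + 4*b₁^2*b₂^2*b₃^6*k₂^2*k₃^4 + 7*b₁^2*b₂^4*b₃^4*k₃^2 - 10*b₁^2*b₂^4*b₃^4*k₂*k₃ - 8*b₁^2*b₂^4*b₃^4*k₂*k₃^3 + 7*b₁^2*b₂^4*b₃^4*k₂^2 + 8*b₁^2*b₂^4*b₃^4*k₂^2*k₃^2 + 4*b₁^2*b₂^4*b₃^4*k₂^2*k₃^4 - 8*b₁^2*b₂^4*b₃^4*k₂^3*k₃ - 4*b₁^2*b₂^4*b₃^4*k₂^3*k₃^3 + 4*b₁^2*b₂^4*b₃^4*k₂^4*k₃^2 - 4*b₁^2*b₂^6*b₃^2*k₂*k₃ + 8*b₁^2*b₂^6*b₃^2*k₂^2 + 4*b₁^2*b₂^6*b₃^2*k₂^2*k₃^2 - 12*b₁^2*b₂^6*b₃^2*k₂^3*k₃ + 4*b₁^2*b₂^6*b₃^2*k₂^4*k₃^2 + 8*b₁^4*b₂^2*b₃^4*k₃^2 - 12*b₁^4*b₂^2*b₃^4*k₂*k₃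 - 4*b₁^4*b₂^2*b₃^4*k₂*k₃^3 + 4*b₁^4*b₂^2*b₃^4*k₂^2 + 4*b₁^4*b₂^2*b₃^4*k₂^2*k₃^2 + 4*b₁^4*b₂^4*b₃^2*k₃^2 - 12*b₁^4*b₂^4*b₃^2*k₂*k₃ + 8*b₁^4*b₂^4*b₃^2*k₂^2 + 4*b₁^4*b₂^4*b₃^2*k₂^2*k₃^2 - 4*b₁^4*b₂^4*b₃^2*k₂^3*k₃ + 4*b₁^6*b₂^2*b₃^2*k₃^2 - 8*b₁^6*b₂^2*b₃^2*k₂*k₃ + 4*b₁^6*b₂^2*b₃^2*k₂^2 := by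
  have h : (4*b₂^2*b₃^8*k₃^2 - 8*b₂^2*b₃^8*k₂*k₃^3 + 4*b₂^2*b₃^8*k₂^2*k₃^4 + 4*b₂^4*b₃^6*k₃^2 - 8*b₂^4*b₃^6*k₂*k₃^3 + 4*b₂^4*b₃^6*k₂^2*k₃^2 + 4*b₂^4*b₃^6*k₂^2*k₃^4 - 8*b₂^4*b₃^6*k₂^3*k₃^3 + 4*b₂^4*b₃^6*k₂^4*k₃^4 + 4*b₂^6*b₃^4*k₂^2 + 4*b₂^6*b₃^4*k₂^2*k₃^2 - 8*b₂^6*b₃^4*k₂^3*k₃ - 8*b₂^6*b₃^4*k₂^3*k₃^3 + 4*b₂^6*b₃^4*k₂^4*k₃^2 + 4*b₂^6*b₃^4*k₂^4*k₃^4 + 4*b₂^8*b₃^2*k₂^2 - 8*b₂^8*b₃^2*k₂^3*k₃ + 4*b₂^8*b₃^2*k₂^4*k₃^2 + 8*b₁^2*b₂^2*b₃^6*k₃^2 - 4*b₁^2*b₂^2*b₃^6*k₂*k₃ - 12*b₁^2*b₂^2*b₃^6*k₂*k₃^3 + 4*b₁^2*b₂^2*b₃^6*k₂^2*k₃^2 +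 4*b₁^2*b₂^2*b₃^6*k₂^2*k₃^4 + 7*b₁^2*b₂^4*b₃^4*k₃^2 - 10*b₁^2*b₂^4*b₃^4*k₂*k₃ - 8*b₁^2*b₂^4*b₃^4*k₂*k₃^3 + 7*b₁^2*b₂^4*b₃^4*k₂^2 + 8*b₁^2*b₂^4*b₃^4*k₂^2*k₃^2 + 4*b₁^2*b₂^4*b₃^4*k₂^2*k₃^4 - 8*b₁^2*b₂^4*b₃^4*k₂^3*k₃ - 4*b₁^2*b₂^4*b₃^4*k₂^3*k₃^3 + 4*b₁^2*b₂^4*b₃^4*k₂^4*k₃^2 - 4*b₁^2*b₂^6*b₃^2*k₂*k₃ + 8*b₁^2*b₂^6*b₃^2*k₂^2 + 4*b₁^2*b₂^6*b₃^2*k₂^2*k₃^2 - 12*b₁^2*b₂^6*b₃^2*k₂^3*k₃ + 4*b₁^2*b₂^6*b₃^2*k₂^4*k₃^2 + 8*b₁^4*b₂^2*b₃^4*k₃^2 - 12*b₁^4*b₂^2*b₃^4*k₂*k₃ - 4*b₁^4*b₂^2*b₃^4*k₂*k₃^3 + 4*b₁^4*b₂^2*b₃^4*k₂^2 + 4*b₁^4*b₂^2*b₃^4*k₂^2*k₃^2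 + 4*b₁^4*b₂^4*b₃^2*k₃^2 - 12*b₁^4*b₂^4*b₃^2*k₂*k₃ + 8*b₁^4*b₂^4*b₃^2*k₂^2 + 4*b₁^4*b₂^4*b₃^2*k₂^2*k₃^2 - 4*b₁^4*b₂^4*b₃^2*k₂^3*k₃ + 4*b₁^6*b₂^2*b₃^2*k₃^2 - 8*b₁^6*b₂^2*b₃^2*k₂*k₃ + 4*b₁^6*b₂^2*b₃^2*k₂^2)
      = 1 * (-2*b₂*b₃^4*k₃ + 2*b₂*b₃^4*k₂*k₃^2 - 1*b₁^2*b₂*b₃^2*k₃ + 1*b₁^2*b₂*b₃^2*k₂)^2 + 4 * (-1*b₂^2*b₃^3*k₃ + 1*b₂^2*b₃^3*k₂*k₃^2)^2 + 4 * (-1*b₂^2*b₃^3*k₂*k₃ + 1*b₂^2*b₃^3*k₂^2*k₃^2)^2 + (1/4) * (-4*b₂^3*b₃^2*k₂ + 4*b₂^3*b₃^2*k₂^2*k₃ + 1*b₁^2*b₂*b₃^2*k₃ - 1*b₁^2*b₂*b₃^2*k₂)^2 + 4 * (-1*b₂^3*b₃^2*k₂*k₃ + 1*b₂^3*b₃^2*k₂^2*k₃^2)^2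 + 1 * (-2*b₂^4*b₃*k₂ + 2*b₂^4*b₃*k₂^2*k₃ + 1*b₁^2*b₂^2*b₃*k₃ - 1*b₁^2*b₂^2*b₃*k₂)^2 + 1 * (-2*b₁*b₂*b₃^3*k₃ + 2*b₁*b₂*b₃^3*k₂*k₃^2 + 1*b₁*b₂^3*b₃*k₂ - 1*b₁*b₂^3*b₃*k₂^2*k₃ - 1*b₁^3*b₂*b₃*k₃ + 1*b₁^3*b₂*b₃*k₂)^2 + (1/5) * (-2*b₁*b₂^2*b₃^2*k₃ + 5*b₁*b₂^2*b₃^2*k₂ - 3*b₁*b₂^2*b₃^2*k₂^2*k₃)^2 + 4 * (-1*b₁*b₂^2*b₃^2*k₃ + 1*b₁*b₂^2*b₃^2*k₂*k₃^2)^2 + (11/5) * (-1*b₁*b₂^2*b₃^2*k₃ + 1*b₁*b₂^2*b₃^2*k₂^2*k₃)^2 + (1/3) * (-3*b₁*b₂^3*b₃*k₂ + 3*b₁*b₂^3*b₃*k₂^2*k₃ + 1*b₁^3*b₂*b₃*k₃ - 1*b₁^3*b₂*b₃*k₂)^2 + (11/4) * (-1*b₁^2*b₂*b₃^2*k₃ +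 1*b₁^2*b₂*b₃^2*k₂)^2 + 3 * (-1*b₁^2*b₂^2*b₃*k₃ + 1*b₁^2*b₂^2*b₃*k₂)^2 + (8/3) * (-1*b₁^3*b₂*b₃*k₃ + 1*b₁^3*b₂*b₃*k₂)^2 := by ring
  rw [h]
  positivity

theorem intertwined_reparam (b₁ b₂ b₃ k₁ k₂ k₃ : ℝ) :
    (k₁^2*b₁^2 + b₂^2 + b₃^2) * (k₂^2*b₂^2 + b₃^2 + b₁^2) * (k₃^2*b₃^2 + b₁^2 + b₂^2) ≥
      (k₁*b₁^2 + k₂*b₂^2 + k₃*b₃^2)^2 * (b₁^2 + b₂^2 + b₃^2)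
        + (1/2) * (b₁^2*b₂^2*b₃^2) * ((k₁ - k₂)^2 + (k₂ - k₃)^2 + (k₁ - k₃)^2) := by
  by_cases hb : b₁ = 0
  · subst hb
    nlinarith [sq_nonneg (b₂^2*b₃ - b₂^2*b₃*k₂*k₃), sq_nonneg (b₂*b₃^2 - b₂*b₃^2*k₂*k₃)]
  · have hx : 0 < b₁^2 := by positivity
    have hA : (0:ℝ) ≤ b₁^2*(b₃^2*(b₁^2+b₃^2)*k₃^2 + b₂^2*(b₁^2+b₂^2)*k₂^2 + b₂^2*b₃^2*(k₂^2*k₃^2)) := by positivity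
    rcases hA.lt_or_eq with hApos | hA0
    · have hd := delta1_nonneg b₁ b₂ b₃ k₂ k₃
      have key : 4*(b₁^2*(b₃^2*(b₁^2+b₃^2)*k₃^2 + b₂^2*(b₁^2+b₂^2)*k₂^2 + b₂^2*b₃^2*(k₂^2*k₃^2)))*(((k₁^2*b₁^2 + b₂^2 + b₃^2) * (k₂^2*b₂^2 + b₃^2 + b₁^2) * (k₃^2*b₃^2 + b₁^2 + b₂^2)) - ((k₁*b₁^2 + k₂*b₂^2 + k₃*b₃^2)^2 * (b₁^2 + b₂^2 + b₃^2) + (1/2) * (b₁^2*b₂^2*b₃^2) * ((k₁ - k₂)^2 + (k₂ - k₃)^2 + (k₁ - k₃)^2)))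
          = (2*(b₁^2*(b₃^2*(b₁^2+b₃^2)*k₃^2 + b₂^2*(b₁^2+b₂^2)*k₂^2 + b₂^2*b₃^2*(k₂^2*k₃^2)))*k₁ + (-(b₁^2*(2*b₃^2*(b₁^2+b₃^2)*k₃ + 2*b₂^2*(b₁^2+b₂^2)*k₂ + b₂^2*b₃^2*(k₂+k₃)))))^2 + b₁^2*(4*b₂^2*b₃^8*k₃^2 - 8*b₂^2*b₃^8*k₂*k₃^3 + 4*b₂^2*b₃^8*k₂^2*k₃^4 + 4*b₂^4*b₃^6*k₃^2 - 8*b₂^4*b₃^6*k₂*k₃^3 + 4*b₂^4*b₃^6*k₂^2*k₃^2 + 4*b₂^4*b₃^6*k₂^2*k₃^4 - 8*b₂^4*b₃^6*k₂^3*k₃^3 + 4*b₂^4*b₃^6*k₂^4*k₃^4 + 4*b₂^6*b₃^4*k₂^2 + 4*b₂^6*b₃^4*k₂^2*k₃^2 - 8*b₂^6*b₃^4*k₂^3*k₃ - 8*b₂^6*b₃^4*k₂^3*k₃^3 + 4*b₂^6*b₃^4*k₂^4*k₃^2 + 4*b₂^6*b₃^4*k₂^4*k₃^4 + 4*b₂^8*b₃^2*k₂^2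 - 8*b₂^8*b₃^2*k₂^3*k₃ + 4*b₂^8*b₃^2*k₂^4*k₃^2 + 8*b₁^2*b₂^2*b₃^6*k₃^2 - 4*b₁^2*b₂^2*b₃^6*k₂*k₃ - 12*b₁^2*b₂^2*b₃^6*k₂*k₃^3 + 4*b₁^2*b₂^2*b₃^6*k₂^2*k₃^2 + 4*b₁^2*b₂^2*b₃^6*k₂^2*k₃^4 + 7*b₁^2*b₂^4*b₃^4*k₃^2 - 10*b₁^2*b₂^4*b₃^4*k₂*k₃ - 8*b₁^2*b₂^4*b₃^4*k₂*k₃^3 + 7*b₁^2*b₂^4*b₃^4*k₂^2 + 8*b₁^2*b₂^4*b₃^4*k₂^2*k₃^2 + 4*b₁^2*b₂^4*b₃^4*k₂^2*k₃^4 - 8*b₁^2*b₂^4*b₃^4*k₂^3*k₃ - 4*b₁^2*b₂^4*b₃^4*k₂^3*k₃^3 + 4*b₁^2*b₂^4*b₃^4*k₂^4*k₃^2 - 4*b₁^2*b₂^6*b₃^2*k₂*k₃ + 8*b₁^2*b₂^6*b₃^2*k₂^2 + 4*b₁^2*b₂^6*b₃^2*k₂^2*k₃^2 - 12*b₁^2*b₂^6*b₃^2*k₂^3*k₃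 + 4*b₁^2*b₂^6*b₃^2*k₂^4*k₃^2 + 8*b₁^4*b₂^2*b₃^4*k₃^2 - 12*b₁^4*b₂^2*b₃^4*k₂*k₃ - 4*b₁^4*b₂^2*b₃^4*k₂*k₃^3 + 4*b₁^4*b₂^2*b₃^4*k₂^2 + 4*b₁^4*b₂^2*b₃^4*k₂^2*k₃^2 + 4*b₁^4*b₂^4*b₃^2*k₃^2 - 12*b₁^4*b₂^4*b₃^2*k₂*k₃ + 8*b₁^4*b₂^4*b₃^2*k₂^2 + 4*b₁^4*b₂^4*b₃^2*k₂^2*k₃^2 - 4*b₁^4*b₂^4*b₃^2*k₂^3*k₃ + 4*b₁^6*b₂^2*b₃^2*k₃^2 - 8*b₁^6*b₂^2*b₃^2*k₂*k₃ + 4*b₁^6*b₂^2*b₃^2*k₂^2) := by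
        ring
      have h4 : (0:ℝ) ≤ 4*(b₁^2*(b₃^2*(b₁^2+b₃^2)*k₃^2 + b₂^2*(b₁^2+b₂^2)*k₂^2 + b₂^2*b₃^2*(k₂^2*k₃^2)))*(((k₁^2*b₁^2 + b₂^2 + b₃^2) * (k₂^2*b₂^2 + b₃^2 + b₁^2) * (k₃^2*b₃^2 + b₁^2 + b₂^2)) - ((k₁*b₁^2 + k₂*b₂^2 + k₃*b₃^2)^2 * (b₁^2 + b₂^2 + b₃^2) + (1/2) * (b₁^2*b₂^2*b₃^2) * ((k₁ - k₂)^2 + (k₂ - k₃)^2 + (k₁ - k₃)^2))) := by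
        rw [key]
        have hsq := sq_nonneg (2*(b₁^2*(b₃^2*(b₁^2+b₃^2)*k₃^2 + b₂^2*(b₁^2+b₂^2)*k₂^2 + b₂^2*b₃^2*(k₂^2*k₃^2)))*k₁ + (-(b₁^2*(2*b₃^2*(b₁^2+b₃^2)*k₃ + 2*b₂^2*(b₁^2+b₂^2)*k₂ + b₂^2*b₃^2*(k₂+k₃)))))
        have hxd := mul_nonneg (sq_nonneg b₁) hd
        linarith
      have hA4 : (0:ℝ) < 4*(b₁^2*(b₃^2*(b₁^2+b₃^2)*k₃^2 + b₂^2*(b₁^2+b₂^2)*k₂^2 + b₂^2*b₃^2*(k₂^2*k₃^2))) := by linarith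
      have h5 : (0:ℝ) ≤ (((k₁^2*b₁^2 + b₂^2 + b₃^2) * (k₂^2*b₂^2 + b₃^2 + b₁^2) * (k₃^2*b₃^2 + b₁^2 + b₂^2)) - ((k₁*b₁^2 + k₂*b₂^2 + k₃*b₃^2)^2 * (b₁^2 + b₂^2 + b₃^2) + (1/2) * (b₁^2*b₂^2*b₃^2) * ((k₁ - k₂)^2 + (k₂ - k₃)^2 + (k₁ - k₃)^2))) := by
        have hmm : (4*(b₁^2*(b₃^2*(b₁^2+b₃^2)*k₃^2 + b₂^2*(b₁^2+b₂^2)*k₂^2 + b₂^2*b₃^2*(k₂^2*k₃^2))))*(0:ℝ) ≤ (4*(b₁^2*(b₃^2*(b₁^2+b₃^2)*k₃^2 + b₂^2*(b₁^2+b₂^2)*k₂^2 + b₂^2*b₃^2*(k₂^2*k₃^2))))*(((k₁^2*b₁^2 + b₂^2 + b₃^2) * (k₂^2*b₂^2 + b₃^2 + b₁^2) * (k₃^2*b₃^2 + b₁^2 + b₂^2)) - ((k₁*b₁^2 + k₂*b₂^2 + k₃*b₃^2)^2 * (b₁^2 + b₂^2 + b₃^2) + (1/2) * (b₁^2*b₂^2*b₃^2)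 * ((k₁ - k₂)^2 + (k₂ - k₃)^2 + (k₁ - k₃)^2))) := by
          rw [mul_zero]
          calc (0:ℝ) ≤ 4*(b₁^2*(b₃^2*(b₁^2+b₃^2)*k₃^2 + b₂^2*(b₁^2+b₂^2)*k₂^2 + b₂^2*b₃^2*(k₂^2*k₃^2)))*(((k₁^2*b₁^2 + b₂^2 + b₃^2) * (k₂^2*b₂^2 + b₃^2 + b₁^2) * (k₃^2*b₃^2 + b₁^2 + b₂^2)) - ((k₁*b₁^2 + k₂*b₂^2 + k₃*b₃^2)^2 * (b₁^2 + b₂^2 + b₃^2) + (1/2) * (b₁^2*b₂^2*b₃^2) * ((k₁ - k₂)^2 + (k₂ - k₃)^2 + (k₁ - k₃)^2))) := h4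
          _ = (4*(b₁^2*(b₃^2*(b₁^2+b₃^2)*k₃^2 + b₂^2*(b₁^2+b₂^2)*k₂^2 + b₂^2*b₃^2*(k₂^2*k₃^2))))*(((k₁^2*b₁^2 + b₂^2 + b₃^2) * (k₂^2*b₂^2 + b₃^2 + b₁^2) * (k₃^2*b₃^2 + b₁^2 + b₂^2)) - ((k₁*b₁^2 + k₂*b₂^2 + k₃*b₃^2)^2 * (b₁^2 + b₂^2 + b₃^2) + (1/2) * (b₁^2*b₂^2*b₃^2) * ((k₁ - k₂)^2 + (k₂ - k₃)^2 + (k₁ - k₃)^2))) := by ring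
        exact le_of_mul_le_mul_left (by linarith [hmm]) hA4
      linarith [h5]
    · have hS : b₃^2*(b₁^2+b₃^2)*k₃^2 + b₂^2*(b₁^2+b₂^2)*k₂^2 + b₂^2*b₃^2*(k₂^2*k₃^2) = 0 := by
        rcases mul_eq_zero.mp hA0.symm with h | h
        · exact absurd h (by positivity)
        · exact h
      have t3 : b₃^2*(b₁^2+b₃^2)*k₃^2 = 0 := by
        nlinarith [hS, sq_nonneg (b₂*k₂), sq_nonneg (b₂*b₃*k₂*k₃), sq_nonneg (b₃*k₃), sq_nonneg b₁, sq_nonneg b₂, sq_nonneg (b₁*b₂*k₂), sq_nonneg (b₂*b₂*k₂)]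
      have t2 : b₂^2*(b₁^2+b₂^2)*k₂^2 = 0 := by
        nlinarith [hS, sq_nonneg (b₃*k₃), sq_nonneg (b₂*b₃*k₂*k₃), sq_nonneg (b₁*b₃*k₃), sq_nonneg (b₃*b₃*k₃)]
      have hbk3 : b₃*k₃ = 0 := by
        have h1 : (b₃*k₃)^2 * (b₁^2+b₃^2) = 0 := by linear_combination t3
        have h2 : (b₃*k₃)^2 = 0 := by
          rcases mul_eq_zero.mp h1 with h | h
          · exact h
          · exact absurd h (by positivity)
        exact pow_eq_zero_iff (n := 2) (by norm_num) |>.mp h2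
      have hbk2 : b₂*k₂ = 0 := by
        have h1 : (b₂*k₂)^2 * (b₁^2+b₂^2) = 0 := by linear_combination t2
        have h2 : (b₂*k₂)^2 = 0 := by
          rcases mul_eq_zero.mp h1 with h | h
          · exact h
          · exact absurd h (by positivity)
        exact pow_eq_zero_iff (n := 2) (by norm_num) |>.mp h2
      rcases mul_eq_zero.mp hbk2 with h2 | h2
      · rcases mul_eq_zero.mp hbk3 with h3 | h3
        · subst h2; subst h3
          nlinarith [sq_nonneg (b₁^2*k₁), sq_nonneg b₁]
        · subst h2; subst h3
          nlinarith [sq_nonneg (b₁^2*b₃), sq_nonneg (b₁*b₃^2)]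
      · rcases mul_eq_zero.mp hbk3 with h3 | h3
        · subst h2; subst h3
          nlinarith [sq_nonneg (b₁^2*b₂), sq_nonneg (b₁*b₂^2)]
        · subst h2; subst h3
          nlinarith [sq_nonneg (b₁^2*b₂), sq_nonneg (b₁*b₂^2), sq_nonneg (b₂^2*b₃), sq_nonneg (b₂*b₃^2), sq_nonneg (b₁^2*b₃), sq_nonneg (b₁*b₃^2), sq_nonneg (b₁*b₂*b₃)]
end

section
/- For any real constant C > 1/2, there exist real numbers b₁, b₂, b₃, k₁, k₂, k₃ such that (k₁²b₁² + b₂² + b₃²)(k₂²b₂² + b₃² + b₁²)(k₃²b₃² + b₁² + b₂²) < (k₁b₁² + k₂b₂² + k₃b₃²)²(b₁² + b₂² + b₃²) + C·b₁²b₂²b₃²·[(k₁−k₂)² + (k₂−k₃)² + (k₁−k₃)²]. In other words, the constant 1/2 in the intertwined inequality is optimal. -/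
theorem half_optimal (C : ℝ) (hC : C > 1/2) :
    ∃ b₁ b₂ b₃ k₁ k₂ k₃ : ℝ,
      (k₁^2*b₁^2 + b₂^2 + b₃^2) * (k₂^2*b₂^2 + b₃^2 + b₁^2) * (k₃^2*b₃^2 + b₁^2 + b₂^2) <
        (k₁*b₁^2 + k₂*b₂^2 + k₃*b₃^2)^2 * (b₁^2 + b₂^2 + b₃^2)
          + C * (b₁^2*b₂^2*b₃^2) * ((k₁ - k₂)^2 + (k₂ - k₃)^2 + (k₁ - k₃)^2) := by
  have h1 : 2*C - 1 > 0 := by linarith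
  set s := Real.sqrt (2*C - 1) with hs
  have hspos : s > 0 := Real.sqrt_pos.mpr h1
  have hs2 : s^2 = 2*C - 1 := Real.sq_sqrt (le_of_lt h1)
  refine ⟨1, 1, 1, 3/s, 0, 0, ?_⟩
  have hk2 : (3/s)^2 = 9/(2*C - 1) := by
    rw [div_pow, hs2]; norm_num
  have hk2' : (2*C - 1) * (3/s)^2 = 9 := by
    rw [hk2]; field_simp
  nlinarith [sq_nonneg (3/s)]
end

section
/- Let a₁, a₂, a₃, b₁, b₂, b₃ be nonzero real numbers. Define for i = 1,2,3: xᵢ = a₁a₂a₃/aᵢ, yᵢ = b₁b₂b₃/bᵢ, pᵢ = (xᵢ − yᵢ)yᵢ, zᵢ = yᵢ². Let c₁ = p₂² + p₂p₃ + p₃², c₂ = p₁² + p₁p₃ + p₃², c₃ = p₁² + p₁p₂ + p₂². Let D = (a₁² + b₂² + b₃²)(a₂² + b₃² + b₁²)(a₃² + b₁² + b₂²) − (a₁b₁ + a₂b₂ + a₃b₃)²(b₁² + b₂² + b₃²) − (1/2)[b₁²(a₂b₃ − a₃b₂)² + b₂²(a₃b₁ − a₁b₃)² + b₃²(a₁b₂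 − a₂b₁)²]. Then y₁y₂y₃ · D = p₁p₂p₃ + c₁z₁ + c₂z₂ + c₃z₃. -/
theorem key_identity (a₁ a₂ a₃ b₁ b₂ b₃ : ℝ)
    (ha₁ : a₁ ≠ 0) (ha₂ : a₂ ≠ 0) (ha₃ : a₃ ≠ 0)
    (hb₁ : b₁ ≠ 0) (hb₂ : b₂ ≠ 0) (hb₃ : b₃ ≠ 0)
    (x₁ x₂ x₃ y₁ y₂ y₃ p₁ p₂ p₃ z₁ z₂ z₃ c₁ c₂ c₃ D : ℝ)
    (hx₁ : x₁ = a₁*a₂*a₃/a₁) (hx₂ : x₂ = a₁*a₂*a₃/a₂) (hx₃ : x₃ = a₁*a₂*a₃/a₃)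
    (hy₁ : y₁ = b₁*b₂*b₃/b₁) (hy₂ : y₂ = b₁*b₂*b₃/b₂) (hy₃ : y₃ = b₁*b₂*b₃/b₃)
    (hp₁ : p₁ = (x₁ - y₁)*y₁) (hp₂ : p₂ = (x₂ - y₂)*y₂) (hp₃ : p₃ = (x₃ - y₃)*y₃)
    (hz₁ : z₁ = y₁^2) (hz₂ : z₂ = y₂^2) (hz₃ : z₃ = y₃^2)
    (hc₁ : c₁ = p₂^2 + p₂*p₃ + p₃^2) (hc₂ : c₂ = p₁^2 + p₁*p₃ + p₃^2)
    (hc₃ : c₃ = p₁^2 + p₁*p₂ + p₂^2)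
    (hD : D = (a₁^2 + b₂^2 + b₃^2) * (a₂^2 + b₃^2 + b₁^2) * (a₃^2 + b₁^2 + b₂^2)
      - (a₁*b₁ + a₂*b₂ + a₃*b₃)^2 * (b₁^2 + b₂^2 + b₃^2)
      - (1/2) * (b₁^2*(a₂*b₃ - a₃*b₂)^2 + b₂^2*(a₃*b₁ - a₁*b₃)^2
          + b₃^2*(a₁*b₂ - a₂*b₁)^2)) :
    y₁*y₂*y₃ * D = p₁*p₂*p₃ + c₁*z₁ + c₂*z₂ + c₃*z₃ := by
  subst hc₁ hc₂ hc₃ hz₁ hz₂ hz₃ hp₁ hp₂ hp₃ hD hx₁ hx₂ hx₃ hy₁ hy₂ hy₃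
  field_simp
  ring
end

section
/- Let p₁, p₂, p₃ be real numbers and let z₁, z₂, z₃ be nonnegative real numbers satisfying (p₁ + z₁)(p₂ + z₂)(p₃ + z₃) ≥ 0. Define c₁ = p₂² + p₂p₃ + p₃², c₂ = p₁² + p₁p₃ + p₃², c₃ = p₁² + p₁p₂ + p₂². Then p₁p₂p₃ + c₁z₁ + c₂z₂ + c₃z₃ ≥ 0. -/
private lemma aux_key (p₁ p₂ p₃ z₁ z₂ z₃ : ℝ)
    (hz₁ : 0 ≤ z₁) (hz₂ : 0 ≤ z₂) (hz₃ : 0 ≤ z₃)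
    (hpair : 0 ≤ p₂ * p₃) (hsum : 0 ≤ p₁ + z₁) :
    0 ≤ p₁*p₂*p₃ + (p₂^2 + p₂*p₃ + p₃^2)*z₁ + (p₁^2 + p₁*p₃ + p₃^2)*z₂
      + (p₁^2 + p₁*p₂ + p₂^2)*z₃ := by
  nlinarith [mul_nonneg hpair hsum, mul_nonneg hz₁ (sq_nonneg p₂),
    mul_nonneg hz₁ (sq_nonneg p₃), mul_nonneg hz₂ (sq_nonneg (p₁+p₃)),
    mul_nonneg hz₂ (sq_nonneg p₁), mul_nonneg hz₂ (sq_nonneg p₃),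
    mul_nonneg hz₃ (sq_nonneg (p₁+p₂)), mul_nonneg hz₃ (sq_nonneg p₁),
    mul_nonneg hz₃ (sq_nonneg p₂)]

theorem key_positivity (p₁ p₂ p₃ z₁ z₂ z₃ : ℝ)
    (hz₁ : 0 ≤ z₁) (hz₂ : 0 ≤ z₂) (hz₃ : 0 ≤ z₃)
    (hfeas : (p₁ + z₁) * (p₂ + z₂) * (p₃ + z₃) ≥ 0) :
    p₁*p₂*p₃ + (p₂^2 + p₂*p₃ + p₃^2)*z₁ + (p₁^2 + p₁*p₃ + p₃^2)*z₂
      + (p₁^2 + p₁*p₂ + p₂^2)*z₃ ≥ 0 := by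
  rcases le_or_gt 0 (p₁ * p₂ * p₃) with heasy | hneg
  · -- all c_i ≥ 0
    nlinarith [mul_nonneg hz₁ (sq_nonneg (p₂+p₃)), mul_nonneg hz₁ (sq_nonneg p₂),
      mul_nonneg hz₁ (sq_nonneg p₃), mul_nonneg hz₂ (sq_nonneg (p₁+p₃)),
      mul_nonneg hz₂ (sq_nonneg p₁), mul_nonneg hz₂ (sq_nonneg p₃),
      mul_nonneg hz₃ (sq_nonneg (p₁+p₂)), mul_nonneg hz₃ (sq_nonneg p₁),
      mul_nonneg hz₃ (sq_nonneg p₂)]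
  · rcases le_or_gt 0 p₁ with hp1 | hp1 <;>
    rcases le_or_gt 0 p₂ with hp2 | hp2 <;>
    rcases le_or_gt 0 p₃ with hp3 | hp3
    · nlinarith [mul_nonneg (mul_nonneg hp1 hp2) hp3]
    · -- p₁,p₂ ≥ 0, p₃ < 0 ⇒ p₁>0, p₂>0, p₃+z₃ ≥ 0
      have h1 : 0 < p₁ := by
        rcases hp1.lt_or_eq with h | h
        · exact h
        · rw [← h] at hneg; simp at hneg
      have h2 : 0 < p₂ := by
        rcases hp2.lt_or_eq with h | h
        · exact h
        · rw [← h] at hneg; nlinarith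
      have h3 : 0 ≤ p₃ + z₃ := by
        by_contra h; push_neg at h
        nlinarith [mul_pos (by linarith : (0:ℝ) < p₁ + z₁) (by linarith : (0:ℝ) < p₂ + z₂)]
      linarith [aux_key p₃ p₁ p₂ z₃ z₁ z₂ hz₃ hz₁ hz₂ (by positivity) h3]
    · have h1 : 0 < p₁ := by
        rcases hp1.lt_or_eq with h | h
        · exact h
        · rw [← h] at hneg; nlinarith
      have h3 : 0 < p₃ := by
        rcases hp3.lt_or_eq with h | h
        · exact h
        · rw [← h] at hneg; nlinarith
      have h2 : 0 ≤ p₂ + z₂ := by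
        by_contra h; push_neg at h
        nlinarith [mul_pos (by linarith : (0:ℝ) < p₁ + z₁) (by linarith : (0:ℝ) < p₃ + z₃)]
      linarith [aux_key p₂ p₁ p₃ z₂ z₁ z₃ hz₂ hz₁ hz₃ (by positivity) h2]
    · -- p₁ ≥ 0, p₂,p₃ < 0 ⇒ product ≥ 0, contradiction
      nlinarith [mul_pos_of_neg_of_neg hp2 hp3]
    · have h2 : 0 < p₂ := by
        rcases hp2.lt_or_eq with h | h
        · exact h
        · rw [← h] at hneg; nlinarith
      have h3 : 0 < p₃ := by
        rcases hp3.lt_or_eq with h | h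
        · exact h
        · rw [← h] at hneg; nlinarith
      have h1 : 0 ≤ p₁ + z₁ := by
        by_contra h; push_neg at h
        nlinarith [mul_pos (by linarith : (0:ℝ) < p₂ + z₂) (by linarith : (0:ℝ) < p₃ + z₃)]
      linarith [aux_key p₁ p₂ p₃ z₁ z₂ z₃ hz₁ hz₂ hz₃ (by positivity) h1]
    · nlinarith [mul_pos_of_neg_of_neg hp1 hp3]
    · nlinarith [mul_pos_of_neg_of_neg hp1 hp2]
    · -- all negative: some pᵢ + zᵢ ≥ 0
      rcases le_or_gt 0 (p₁ + z₁) with h1 | h1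
      · linarith [aux_key p₁ p₂ p₃ z₁ z₂ z₃ hz₁ hz₂ hz₃
          (le_of_lt (mul_pos_of_neg_of_neg hp2 hp3)) h1]
      rcases le_or_gt 0 (p₂ + z₂) with h2 | h2
      · linarith [aux_key p₂ p₁ p₃ z₂ z₁ z₃ hz₂ hz₁ hz₃
          (le_of_lt (mul_pos_of_neg_of_neg hp1 hp3)) h2]
      have h3 : 0 ≤ p₃ + z₃ := by
        by_contra h; push_neg at h
        nlinarith [mul_pos_of_neg_of_neg h1 h2]
      linarith [aux_key p₃ p₁ p₂ z₃ z₁ z₂ hz₃ hz₁ hz₂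
        (le_of_lt (mul_pos_of_neg_of_neg hp1 hp2)) h3]
end

section
/- Let p₁, p₂, p₃ be nonzero real numbers with p₁p₂p₃ < 0, and let c₁ = p₂² + p₂p₃ + p₃², c₂ = p₁² + p₁p₃ + p₃², c₃ = p₁² + p₁p₂ + p₂². For nonnegative reals z₁, z₂, z₃ with (p₁+z₁)(p₂+z₂)(p₃+z₃) ≥ 0, define d(z₁,z₂,z₃) = p₁p₂p₃ + c₁z₁ + c₂z₂ + c₃z₃. Then the infimum of d over this feasible set is attained at a point where, for each i, either zᵢ = 0 or zᵢ = −pᵢ (with −pᵢ > 0 in the latter case), and this infimum is positive. -/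
private lemma cpos (a b : ℝ) (ha : a ≠ 0) : 0 < a^2 + a*b + b^2 := by
  rcases ha.lt_or_gt with h|h <;> nlinarith [sq_nonneg (a+b), sq_nonneg a, sq_nonneg b]

set_option maxHeartbeats 800000 in
theorem min_attained (p₁ p₂ p₃ : ℝ) (hp₁ : p₁ ≠ 0) (hp₂ : p₂ ≠ 0) (hp₃ : p₃ ≠ 0)
    (hneg : p₁*p₂*p₃ < 0) :
    ∃ z₁ z₂ z₃ : ℝ, 0 ≤ z₁ ∧ 0 ≤ z₂ ∧ 0 ≤ z₃ ∧
      (p₁ + z₁)*(p₂ + z₂)*(p₃ + z₃) ≥ 0 ∧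
      (z₁ = 0 ∨ (z₁ = -p₁ ∧ -p₁ > 0)) ∧
      (z₂ = 0 ∨ (z₂ = -p₂ ∧ -p₂ > 0)) ∧
      (z₃ = 0 ∨ (z₃ = -p₃ ∧ -p₃ > 0)) ∧
      (∀ w₁ w₂ w₃ : ℝ, 0 ≤ w₁ → 0 ≤ w₂ → 0 ≤ w₃ →
        (p₁ + w₁)*(p₂ + w₂)*(p₃ + w₃) ≥ 0 →
        p₁*p₂*p₃ + (p₂^2 + p₂*p₃ + p₃^2)*z₁ + (p₁^2 + p₁*p₃ + p₃^2)*z₂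
            + (p₁^2 + p₁*p₂ + p₂^2)*z₃ ≤
          p₁*p₂*p₃ + (p₂^2 + p₂*p₃ + p₃^2)*w₁ + (p₁^2 + p₁*p₃ + p₃^2)*w₂
            + (p₁^2 + p₁*p₂ + p₂^2)*w₃) ∧
      0 < p₁*p₂*p₃ + (p₂^2 + p₂*p₃ + p₃^2)*z₁ + (p₁^2 + p₁*p₃ + p₃^2)*z₂
          + (p₁^2 + p₁*p₂ + p₂^2)*z₃ := by
  have hc1 : 0 < p₂^2 + p₂*p₃ + p₃^2 := cpos _ _ hp₂
  have hc2 : 0 < p₁^2 + p₁*p₃ + p₃^2 := cpos _ _ hp₁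
  have hc3 : 0 < p₁^2 + p₁*p₂ + p₂^2 := cpos _ _ hp₁
  rcases hp₁.lt_or_gt with h1|h1 <;> rcases hp₂.lt_or_gt with h2|h2 <;>
    rcases hp₃.lt_or_gt with h3|h3
  · -- all negative
    rcases le_total (-p₁*(p₂^2 + p₂*p₃ + p₃^2)) (-p₂*(p₁^2 + p₁*p₃ + p₃^2)) with ha|ha
    · rcases le_total (-p₁*(p₂^2 + p₂*p₃ + p₃^2)) (-p₃*(p₁^2 + p₁*p₂ + p₂^2)) with hb|hb
      · -- index 1
        refine ⟨-p₁, 0, 0, by linarith, le_refl 0, le_refl 0, ge_of_eq (by ring),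
          Or.inr ⟨rfl, by linarith⟩, Or.inl rfl, Or.inl rfl, ?_, by nlinarith [mul_pos (neg_pos.mpr h1) (mul_self_pos.mpr hp₂), mul_nonneg (neg_pos.mpr h1).le (mul_self_nonneg p₃)]⟩
        intro w₁ w₂ w₃ hw₁ hw₂ hw₃ hprod
        have hd : 0 ≤ p₁+w₁ ∨ 0 ≤ p₂+w₂ ∨ 0 ≤ p₃+w₃ := by
          by_contra h
          push_neg at h
          obtain ⟨a1, a2, a3⟩ := h
          nlinarith [mul_pos (mul_pos (by linarith : (0:ℝ) < -(p₁+w₁))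
            (by linarith : (0:ℝ) < -(p₂+w₂))) (by linarith : (0:ℝ) < -(p₃+w₃))]
        rcases hd with hd|hd|hd
        · linarith [mul_nonneg hc2.le hw₂, mul_nonneg hc3.le hw₃,
            mul_le_mul_of_nonneg_left (by linarith : -p₁ ≤ w₁) hc1.le]
        · linarith [mul_nonneg hc1.le hw₁, mul_nonneg hc3.le hw₃,
            mul_le_mul_of_nonneg_left (by linarith : -p₂ ≤ w₂) hc2.le]
        · linarith [mul_nonneg hc1.le hw₁, mul_nonneg hc2.le hw₂,
            mul_le_mul_of_nonneg_left (by linarith : -p₃ ≤ w₃) hc3.le]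
      · -- index 3
        refine ⟨0, 0, -p₃, le_refl 0, le_refl 0, by linarith, ge_of_eq (by ring),
          Or.inl rfl, Or.inl rfl, Or.inr ⟨rfl, by linarith⟩, ?_, by nlinarith [mul_pos (neg_pos.mpr h3) (mul_self_pos.mpr hp₁), mul_nonneg (neg_pos.mpr h3).le (mul_self_nonneg p₂)]⟩
        intro w₁ w₂ w₃ hw₁ hw₂ hw₃ hprod
        have hd : 0 ≤ p₁+w₁ ∨ 0 ≤ p₂+w₂ ∨ 0 ≤ p₃+w₃ := by
          by_contra h
          push_neg at h
          obtain ⟨a1, a2, a3⟩ := h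
          nlinarith [mul_pos (mul_pos (by linarith : (0:ℝ) < -(p₁+w₁))
            (by linarith : (0:ℝ) < -(p₂+w₂))) (by linarith : (0:ℝ) < -(p₃+w₃))]
        rcases hd with hd|hd|hd
        · linarith [mul_nonneg hc2.le hw₂, mul_nonneg hc3.le hw₃,
            mul_le_mul_of_nonneg_left (by linarith : -p₁ ≤ w₁) hc1.le]
        · linarith [mul_nonneg hc1.le hw₁, mul_nonneg hc3.le hw₃,
            mul_le_mul_of_nonneg_left (by linarith : -p₂ ≤ w₂) hc2.le]
        · linarith [mul_nonneg hc1.le hw₁, mul_nonneg hc2.le hw₂,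
            mul_le_mul_of_nonneg_left (by linarith : -p₃ ≤ w₃) hc3.le]
    · rcases le_total (-p₂*(p₁^2 + p₁*p₃ + p₃^2)) (-p₃*(p₁^2 + p₁*p₂ + p₂^2)) with hb|hb
      · -- index 2
        refine ⟨0, -p₂, 0, le_refl 0, by linarith, le_refl 0, ge_of_eq (by ring),
          Or.inl rfl, Or.inr ⟨rfl, by linarith⟩, Or.inl rfl, ?_, by nlinarith [mul_pos (neg_pos.mpr h2) (mul_self_pos.mpr hp₁), mul_nonneg (neg_pos.mpr h2).le (mul_self_nonneg p₃)]⟩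
        intro w₁ w₂ w₃ hw₁ hw₂ hw₃ hprod
        have hd : 0 ≤ p₁+w₁ ∨ 0 ≤ p₂+w₂ ∨ 0 ≤ p₃+w₃ := by
          by_contra h
          push_neg at h
          obtain ⟨a1, a2, a3⟩ := h
          nlinarith [mul_pos (mul_pos (by linarith : (0:ℝ) < -(p₁+w₁))
            (by linarith : (0:ℝ) < -(p₂+w₂))) (by linarith : (0:ℝ) < -(p₃+w₃))]
        rcases hd with hd|hd|hd
        · linarith [mul_nonneg hc2.le hw₂, mul_nonneg hc3.le hw₃,
            mul_le_mul_of_nonneg_left (by linarith : -p₁ ≤ w₁) hc1.le]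
        · linarith [mul_nonneg hc1.le hw₁, mul_nonneg hc3.le hw₃,
            mul_le_mul_of_nonneg_left (by linarith : -p₂ ≤ w₂) hc2.le]
        · linarith [mul_nonneg hc1.le hw₁, mul_nonneg hc2.le hw₂,
            mul_le_mul_of_nonneg_left (by linarith : -p₃ ≤ w₃) hc3.le]
      · -- index 3
        refine ⟨0, 0, -p₃, le_refl 0, le_refl 0, by linarith, ge_of_eq (by ring),
          Or.inl rfl, Or.inl rfl, Or.inr ⟨rfl, by linarith⟩, ?_, by nlinarith [mul_pos (neg_pos.mpr h3) (mul_self_pos.mpr hp₁), mul_nonneg (neg_pos.mpr h3).le (mul_self_nonneg p₂)]⟩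
        intro w₁ w₂ w₃ hw₁ hw₂ hw₃ hprod
        have hd : 0 ≤ p₁+w₁ ∨ 0 ≤ p₂+w₂ ∨ 0 ≤ p₃+w₃ := by
          by_contra h
          push_neg at h
          obtain ⟨a1, a2, a3⟩ := h
          nlinarith [mul_pos (mul_pos (by linarith : (0:ℝ) < -(p₁+w₁))
            (by linarith : (0:ℝ) < -(p₂+w₂))) (by linarith : (0:ℝ) < -(p₃+w₃))]
        rcases hd with hd|hd|hd
        · linarith [mul_nonneg hc2.le hw₂, mul_nonneg hc3.le hw₃,
            mul_le_mul_of_nonneg_left (by linarith : -p₁ ≤ w₁) hc1.le]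
        · linarith [mul_nonneg hc1.le hw₁, mul_nonneg hc3.le hw₃,
            mul_le_mul_of_nonneg_left (by linarith : -p₂ ≤ w₂) hc2.le]
        · linarith [mul_nonneg hc1.le hw₁, mul_nonneg hc2.le hw₂,
            mul_le_mul_of_nonneg_left (by linarith : -p₃ ≤ w₃) hc3.le]
  · -- p₁<0, p₂<0, p₃>0 : product positive, contradiction
    exact absurd hneg (by nlinarith [mul_pos (mul_pos (neg_pos.mpr h1) (neg_pos.mpr h2)) h3])
  · -- p₁<0, p₂>0, p₃<0 : contradiction
    exact absurd hneg (by nlinarith [mul_pos (mul_pos (neg_pos.mpr h1) h2) (neg_pos.mpr h3)])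
  · -- p₁<0, p₂>0, p₃>0 : index 1
    refine ⟨-p₁, 0, 0, by linarith, le_refl 0, le_refl 0, ge_of_eq (by ring),
      Or.inr ⟨rfl, by linarith⟩, Or.inl rfl, Or.inl rfl, ?_, by nlinarith [mul_pos (neg_pos.mpr h1) (mul_self_pos.mpr hp₂), mul_nonneg (neg_pos.mpr h1).le (mul_self_nonneg p₃)]⟩
    intro w₁ w₂ w₃ hw₁ hw₂ hw₃ hprod
    have h1w : 0 ≤ p₁ + w₁ := by
      by_contra h
      push_neg at h
      nlinarith [mul_pos (by linarith : (0:ℝ) < p₂+w₂) (by linarith : (0:ℝ) < p₃+w₃)]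
    linarith [mul_nonneg hc2.le hw₂, mul_nonneg hc3.le hw₃,
      mul_le_mul_of_nonneg_left (by linarith : -p₁ ≤ w₁) hc1.le]
  · -- p₁>0, p₂<0, p₃<0 : contradiction
    exact absurd hneg (by nlinarith [mul_pos (mul_pos h1 (neg_pos.mpr h2)) (neg_pos.mpr h3)])
  · -- p₁>0, p₂<0, p₃>0 : index 2
    refine ⟨0, -p₂, 0, le_refl 0, by linarith, le_refl 0, ge_of_eq (by ring),
      Or.inl rfl, Or.inr ⟨rfl, by linarith⟩, Or.inl rfl, ?_, by nlinarith [mul_pos (neg_pos.mpr h2) (mul_self_pos.mpr hp₁), mul_nonneg (neg_pos.mpr h2).le (mul_self_nonneg p₃)]⟩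
    intro w₁ w₂ w₃ hw₁ hw₂ hw₃ hprod
    have h2w : 0 ≤ p₂ + w₂ := by
      by_contra h
      push_neg at h
      nlinarith [mul_pos (by linarith : (0:ℝ) < p₁+w₁) (by linarith : (0:ℝ) < p₃+w₃)]
    linarith [mul_nonneg hc1.le hw₁, mul_nonneg hc3.le hw₃,
      mul_le_mul_of_nonneg_left (by linarith : -p₂ ≤ w₂) hc2.le]
  · -- p₁>0, p₂>0, p₃<0 : index 3
    refine ⟨0, 0, -p₃, le_refl 0, le_refl 0, by linarith, ge_of_eq (by ring),
      Or.inl rfl, Or.inl rfl, Or.inr ⟨rfl, by linarith⟩, ?_, by nlinarith [mul_pos (neg_pos.mpr h3) (mul_self_pos.mpr hp₁), mul_nonneg (neg_pos.mpr h3).le (mul_self_nonneg p₂)]⟩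
    intro w₁ w₂ w₃ hw₁ hw₂ hw₃ hprod
    have h3w : 0 ≤ p₃ + w₃ := by
      by_contra h
      push_neg at h
      nlinarith [mul_pos (by linarith : (0:ℝ) < p₁+w₁) (by linarith : (0:ℝ) < p₂+w₂)]
    linarith [mul_nonneg hc1.le hw₁, mul_nonneg hc2.le hw₂,
      mul_le_mul_of_nonneg_left (by linarith : -p₃ ≤ w₃) hc3.le]
  · -- all positive : contradiction
    exact absurd hneg (by nlinarith [mul_pos (mul_pos h1 h2) h3])
end
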